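/- Conversely, if two MV-logistic parameterizations (γ, α, β) and (γ', α', β') with αβ^T ≠ 0 induce the same conditional probability function P(Y=1|X) for all p×q matrices X, then γ = γ' and α'β'^T = αβ^T, i.e., the outer product matrix and intercept are identified. -/

import Mathlib

open Matrix

noncomputable def logistic (t : ℝ) : ℝ := Real.exp t / (1 + Real.exp t)

theorem logistic_eq_sigmoid : logistic = Real.sigmoid := by
  funext t
  rw [logistic, Real.sigmoid_def, Real.exp_neg]
  field_simp
  ring

theorem logistic_injective : Function.Injective logistic :=
  logistic_eq_sigmoid ▸ Real.sigmoid_injective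

section Bilinear

variable {m n R : Type*} [Fintype m] [Fintype n] [DecidableEq m] [DecidableEq n]

theorem dotProduct_single_mulVec [NonUnitalNonAssocSemiring R] (u : m → R) (i : m) (j : n)
    (c : R) (v : n → R) : u ⬝ᵥ single i j c *ᵥ v = u i * (c * v j) := by
  rw [single_mulVec]
  exact dotProduct_single u (c * v j) i

theorem vecMulVec_eq_of_forall_dotProduct_mulVec_eq [NonAssocSemiring R]
    {α α' : m → R} {β β' : n → R}
    (h : ∀ X : Matrix m n R, α ⬝ᵥ X *ᵥ β = α' ⬝ᵥ X *ᵥ β') :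
    vecMulVec α β = vecMulVec α' β' := by
  ext i j
  simpa [dotProduct_single_mulVec, vecMulVec_apply] using h (single i j 1)

theorem eq_and_vecMulVec_eq_of_forall_add_dotProduct_mulVec_eq [Ring R]
    {γ γ' : R} {α α' : m → R} {β β' : n → R}
    (h : ∀ X : Matrix m n R, γ + α ⬝ᵥ X *ᵥ β = γ' + α' ⬝ᵥ X *ᵥ β') :
    γ = γ' ∧ vecMulVec α' β' = vecMulVec α β := by
  have hγ : γ = γ' := by simpa using h 0
  subst hγ
  exact ⟨rfl, (vecMulVec_eq_of_forall_dotProduct_mulVec_eq fun X ↦ add_left_cancel (h X)).symm⟩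

end Bilinear

theorem mvlogistic_identifiability_general (p q : ℕ)
    (γ γ' : ℝ) (α α' : Fin p → ℝ) (β β' : Fin q → ℝ)
    (h : ∀ X : Matrix (Fin p) (Fin q) ℝ,
      logistic (γ + α ⬝ᵥ X.mulVec β) = logistic (γ' + α' ⬝ᵥ X.mulVec β')) :
    γ = γ' ∧ Matrix.vecMulVec α' β' = Matrix.vecMulVec α β :=
  eq_and_vecMulVec_eq_of_forall_add_dotProduct_mulVec_eq fun X ↦ logistic_injective (h X)

/-- If two MV-logistic parameterizations with αβ^T ≠ 0 induce the same
conditional probability for every X, then the intercept and the outer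
product matrix are identified. -/
theorem mvlogistic_identifiability (p q : ℕ)
    (γ γ' : ℝ) (α α' : Fin p → ℝ) (β β' : Fin q → ℝ)
    (hne : Matrix.vecMulVec α β ≠ 0)
    (h : ∀ X : Matrix (Fin p) (Fin q) ℝ,
      logistic (γ + α ⬝ᵥ X.mulVec β) = logistic (γ' + α' ⬝ᵥ X.mulVec β')) :
    γ = γ' ∧ Matrix.vecMulVec α' β' = Matrix.vecMulVec α β :=
  mvlogistic_identifiability_general p q γ γ' α α' β β' h
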